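/- For every real number M > 0 and every (τ,x) with (1-τ)² - x² < 1, the volume density Ω·r² of the slices Σ_τ satisfies the exact rate-of-change identity ∂_τ (Ω(τ,x)·r(τ,x)²) = (3/(2·r(τ,x)) - 1/(4M)) · (Ω²(τ,x)·(1-τ)/(4M)) · Ω(τ,x)·r(τ,x)²; in particular the leading coefficient as r → 0 is 12M²(1-τ)/r² + O(1/r). -/

import Mathlib

/-- The Kruskal relation function `f_M(ρ) = (1 - ρ/(2M))·exp(ρ/(2M))`. -/
noncomputable def fM (M ρ : ℝ) : ℝ := (1 - ρ / (2 * M)) * Real.exp (ρ / (2 * M))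

/-- The radius function in the `(τ,x)` coordinates: `r(τ,x) = r_M((1-τ)² - x²)`. -/
noncomputable def rr (rM : ℝ → ℝ) (τ x : ℝ) : ℝ := rM ((1 - τ) ^ 2 - x ^ 2)

/-- The conformal factor `Ω²(τ,x) = (32M³/r(τ,x))·exp(-r(τ,x)/(2M))`. -/
noncomputable def Om2 (M : ℝ) (rM : ℝ → ℝ) (τ x : ℝ) : ℝ :=
  32 * M ^ 3 / rr rM τ x * Real.exp (-(rr rM τ x) / (2 * M))

/-- `Ω(τ,x) = √(Ω²(τ,x))`. -/
noncomputable def Om (M : ℝ) (rM : ℝ → ℝ) (τ x : ℝ) : ℝ := Real.sqrt (Om2 M rM τ x)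

/-!
Since `f_M(r) = (1-τ)² - x²` and `f_M'(ρ) = -ρ e^{ρ/(2M)}/(4M²)` is negative for `ρ > 0`, so that
the inverse `r_M` of `f_M` on `[0, ∞)` is continuous, implicit differentiation gives
`∂_τ r = 8M²(1-τ) e^{-r/(2M)}/r = Ω²(1-τ)/(4M)`. The density `Ω r²` is a function of `r` alone,
`√(32M³) r^{3/2} e^{-r/(4M)}`, whose logarithmic derivative in `r` is `3/(2r) - 1/(4M)`;
the chain rule combines the two.
-/

open Filter Set Topology

theorem StrictAntiOn.continuousAt_of_local_left_inverse {f g : ℝ → ℝ} {c s₀ : ℝ}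
    (hf : StrictAntiOn f (Ici c)) (hg : ∀ᶠ s in 𝓝 s₀, g s ∈ Ici c ∧ f (g s) = s) :
    ContinuousAt g s₀ := by
  have hs₀ := hg.self_of_nhds
  refine tendsto_order.2 ⟨fun a ha => ?_, fun b hb => ?_⟩
  · rcases lt_or_ge a c with hac | hca
    · filter_upwards [hg] with s hs using hac.trans_le hs.1
    · have hfa : s₀ < f a := hs₀.2 ▸ hf hca hs₀.1 ha
      filter_upwards [hg, eventually_lt_nhds hfa] with s hs hsa
      exact (hf.lt_iff_gt hs.1 hca).1 (hs.2.symm ▸ hsa)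
  · have hcb : b ∈ Ici c := le_trans hs₀.1 hb.le
    have hfb : f b < s₀ := hs₀.2 ▸ hf hs₀.1 hcb hb
    filter_upwards [hg, eventually_gt_nhds hfb] with s hs hsb
    exact (hf.lt_iff_gt hcb hs.1).1 (hs.2.symm ▸ hsb)

noncomputable def conformalFactorSq (M ρ : ℝ) : ℝ := 32 * M ^ 3 / ρ * Real.exp (-ρ / (2 * M))

theorem hasDerivAt_conformalFactorSq {M ρ : ℝ} (hM : M ≠ 0) (hρ : ρ ≠ 0) :
    HasDerivAt (conformalFactorSq M) (-(1 / ρ + 1 / (2 * M)) * conformalFactorSq M ρ) ρ := by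
  have hlin : HasDerivAt (fun ρ : ℝ => -ρ / (2 * M)) (-1 / (2 * M)) ρ :=
    (hasDerivAt_neg ρ).div_const _
  refine (((hasDerivAt_inv hρ).const_mul (32 * M ^ 3)).mul hlin.exp).congr_deriv ?_
  rw [conformalFactorSq]
  field_simp
  ring

theorem hasDerivAt_sqrt_conformalFactorSq_mul_sq {M ρ : ℝ} (hM : 0 < M) (hρ : 0 < ρ) :
    HasDerivAt (fun ρ => √(conformalFactorSq M ρ) * ρ ^ 2)
      ((3 / (2 * ρ) - 1 / (4 * M)) * (√(conformalFactorSq M ρ) * ρ ^ 2)) ρ := by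
  have hpos : 0 < conformalFactorSq M ρ := by unfold conformalFactorSq; positivity
  refine (((hasDerivAt_conformalFactorSq hM.ne' hρ.ne').sqrt hpos.ne').mul
    (hasDerivAt_pow 2 ρ)).congr_deriv ?_
  have hsq := Real.sq_sqrt hpos.le
  have hsqrt := Real.sqrt_pos.2 hpos
  field_simp
  linear_combination (8 * ρ * M + 4 * ρ ^ 2) * hsq

section Kruskal

variable {M : ℝ}

theorem hasDerivAt_fM (hM : M ≠ 0) (ρ : ℝ) :
    HasDerivAt (fM M) (-(ρ * Real.exp (ρ / (2 * M))) / (4 * M ^ 2)) ρ := by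
  have hlin : HasDerivAt (fun ρ : ℝ => ρ / (2 * M)) (1 / (2 * M)) ρ :=
    (hasDerivAt_id ρ).div_const _
  refine ((hlin.const_sub 1).mul hlin.exp).congr_deriv ?_
  field_simp
  ring

theorem fM_strictAntiOn (hM : 0 < M) : StrictAntiOn (fM M) (Ici 0) := by
  refine strictAntiOn_of_deriv_neg (convex_Ici 0)
    (fun ρ _ => (hasDerivAt_fM hM.ne' ρ).continuousAt.continuousWithinAt) fun ρ hρ => ?_
  rw [interior_Ici, mem_Ioi] at hρ
  rw [(hasDerivAt_fM hM.ne' ρ).deriv, neg_div]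
  exact neg_neg_of_pos (by positivity)

variable {rM : ℝ → ℝ} (hM : 0 < M) (hrM : ∀ s : ℝ, s < 1 → 0 < rM s ∧ fM M (rM s) = s)
include hM hrM

theorem hasDerivAt_rM {s : ℝ} (hs : s < 1) :
    HasDerivAt rM (-(4 * M ^ 2) * Real.exp (-rM s / (2 * M)) / rM s) s := by
  have hρ := (hrM s hs).1
  have hinv : ∀ᶠ t in 𝓝 s, rM t ∈ Ici 0 ∧ fM M (rM t) = t := by
    filter_upwards [eventually_lt_nhds hs] with t ht using ⟨(hrM t ht).1.le, (hrM t ht).2⟩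
  have hf' : -(rM s * Real.exp (rM s / (2 * M))) / (4 * M ^ 2) ≠ 0 :=
    div_ne_zero (neg_ne_zero.2 (by positivity)) (by positivity)
  refine ((hasDerivAt_fM hM.ne' (rM s)).of_local_left_inverse
    ((fM_strictAntiOn hM).continuousAt_of_local_left_inverse hinv) hf'
    (hinv.mono fun _ ht => ht.2)).congr_deriv ?_
  rw [neg_div (2 * M) (rM s), Real.exp_neg]
  field_simp

theorem hasDerivAt_rr {τ x : ℝ} (h : (1 - τ) ^ 2 - x ^ 2 < 1) :
    HasDerivAt (fun t => rr rM t x) (Om2 M rM τ x * (1 - τ) / (4 * M)) τ := by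
  have hs : HasDerivAt (fun t : ℝ => (1 - t) ^ 2 - x ^ 2) (2 * (1 - τ) * -1) τ := by
    simpa using (((hasDerivAt_id τ).const_sub 1).pow 2).sub_const (x ^ 2)
  refine ((hasDerivAt_rM hM hrM h).comp τ hs).congr_deriv ?_
  have := (hrM _ h).1
  rw [Om2, rr]
  field_simp
  ring

end Kruskal

/-- For every `M > 0` and `(τ,x)` with `(1-τ)² - x² < 1`, the volume density `Ω·r²`
of the slices `Σ_τ` satisfies the exact rate-of-change identity
`∂_τ(Ω·r²) = (3/(2r) - 1/(4M)) · (Ω²·(1-τ)/(4M)) · Ω·r²`. -/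
theorem volume_density_rate_of_change (M : ℝ) (hM : 0 < M) (rM : ℝ → ℝ)
    (hrM : ∀ s : ℝ, s < 1 → 0 < rM s ∧ fM M (rM s) = s)
    (τ x : ℝ) (h : (1 - τ) ^ 2 - x ^ 2 < 1) :
    HasDerivAt (fun t : ℝ => Om M rM t x * (rr rM t x) ^ 2)
      ((3 / (2 * rr rM τ x) - 1 / (4 * M)) * (Om2 M rM τ x * (1 - τ) / (4 * M)) *
        (Om M rM τ x * (rr rM τ x) ^ 2)) τ := by
  have hr : 0 < rr rM τ x := (hrM _ h).1
  have hOm2 : Om2 M rM τ x = conformalFactorSq M (rr rM τ x) := rfl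
  refine ((hasDerivAt_sqrt_conformalFactorSq_mul_sq hM hr).comp τ
    (hasDerivAt_rr hM hrM h)).congr_deriv ?_
  rw [Om, hOm2]
  ring
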